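/- Let T be a triangulation of an unpunctured disc S with N marked points, and for distinct boundary vertices i, j let n_{ij} denote the number of matchings between T and the set of all vertices except i and j. Then for any four boundary vertices i, j, k, l appearing in clockwise order, the Ptolemy relation n_{ik} · n_{jl} = n_{ij} · n_{kl} + n_{li} · n_{jk} holds. -/
import Mathlib


noncomputable section
open scoped Classical

namespace Frieze

/-- Vertices of the disc with `N` marked points, labelled clockwise. -/
abbrev Vx (N : ℕ) := ZMod N

/-- `Btw a x b` : `x` lies strictly between `a` and `b`, going clockwise. -/
def Btw {N : ℕ} (a x b : Vx N) : Prop :=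
  0 < (x - a).val ∧ (x - a).val < (b - a).val

/-- A valid diagonal (arc) of the unpunctured disc: endpoints distinct and non-adjacent. -/
def IsDiag (N : ℕ) (p : Vx N × Vx N) : Prop :=
  p.2 ≠ p.1 ∧ p.2 ≠ p.1 + 1 ∧ p.1 ≠ p.2 + 1

/-- Two chords cross iff their endpoints strictly interleave in the cyclic order. -/
def DCross {N : ℕ} (p q : Vx N × Vx N) : Prop :=
  (Btw p.1 q.1 p.2 ∧ Btw p.2 q.2 p.1) ∨ (Btw p.1 q.2 p.2 ∧ Btw p.2 q.1 p.1)

/-- A triangulation of the unpunctured disc with `N` marked points: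
a maximal collection of pairwise noncrossing diagonals (each recorded once). -/
structure Triang (N : ℕ) where
  diag : Finset (Vx N × Vx N)
  valid : ∀ p ∈ diag, IsDiag N p
  nodupSym : ∀ p ∈ diag, (p.2, p.1) ∉ diag
  noncross : ∀ p ∈ diag, ∀ q ∈ diag, ¬ DCross p q
  maximal : ∀ p, IsDiag N p → (∀ q ∈ diag, ¬ DCross p q) → p ∈ diag ∨ (p.2, p.1) ∈ diag

/-- The unordered diagonal `{a,b}` belongs to `T`. -/
def MemD {N : ℕ} (T : Triang N) (a b : Vx N) : Prop :=
  (a, b) ∈ T.diag ∨ (b, a) ∈ T.diag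

/-- The segment from `a` to `a + d` (going `d` steps clockwise) can be a side of a
triangle: it is a boundary edge (`d = 1`) or a diagonal of `T`. -/
def USide {N : ℕ} (T : Triang N) (a : Vx N) (d : ℕ) : Prop :=
  d = 1 ∨ MemD T a (a + (d : Vx N))

/-- `(a, p, q)` encodes the triangle with vertices `a`, `a+p`, `a+p+q` (clockwise);
the canonicity condition (`a` carries the smallest label) makes each triangle of
the triangulation be recorded exactly once. -/
def IsUTri {N : ℕ} (T : Triang N) (t : Vx N × ℕ × ℕ) : Prop :=
  1 ≤ t.2.1 ∧ 1 ≤ t.2.2 ∧ t.2.1 + t.2.2 ≤ N - 1 ∧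
  USide T t.1 t.2.1 ∧ USide T (t.1 + (t.2.1 : Vx N)) t.2.2 ∧
  USide T (t.1 + ((t.2.1 + t.2.2 : ℕ) : Vx N)) (N - t.2.1 - t.2.2) ∧
  t.1.val < (t.1 + (t.2.1 : Vx N)).val ∧ t.1.val < (t.1 + ((t.2.1 + t.2.2 : ℕ) : Vx N)).val

/-- Incidence of a vertex with a triangle. -/
def UInc {N : ℕ} (v : Vx N) (t : Vx N × ℕ × ℕ) : Prop :=
  v = t.1 ∨ v = t.1 + (t.2.1 : Vx N) ∨ v = t.1 + ((t.2.1 + t.2.2 : ℕ) : Vx N)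

/-- The number of matchings between the vertex set `I` and those triangles of `T`
lying in `S` : injective allocations, to each vertex of `I`, of an incident triangle. -/
def UMatchIn {N : ℕ} (T : Triang N) (I : Finset (Vx N)) (S : Set (Vx N × ℕ × ℕ)) : ℕ :=
  Set.ncard {f : I → Vx N × ℕ × ℕ | Function.Injective f ∧
    ∀ v : I, IsUTri T (f v) ∧ f v ∈ S ∧ UInc v.1 (f v)}

/-- The number of matchings between the vertex set `I` and the triangulation `T`. -/
def UMatch {N : ℕ} (T : Triang N) (I : Finset (Vx N)) : ℕ :=
  UMatchIn T I Set.univ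

/-- `n_{ij}` : the number of matchings between `T` and all marked points except `i, j`. -/
def nMatch {N : ℕ} [NeZero N] (T : Triang N) (i j : Vx N) : ℕ :=
  UMatch T (Finset.univ \ {i, j})

/-- `i` and `j` are joined by an edge of the triangulated polygon
(a boundary edge or a diagonal of `T`). -/
def Joined {N : ℕ} (T : Triang N) (i j : Vx N) : Prop :=
  j = i + 1 ∨ i = j + 1 ∨ MemD T i j

/-- `x` lies in the closed clockwise arc from `a` to `b`. -/
def InCWArc {N : ℕ} (a x b : Vx N) : Prop := x = a ∨ x = b ∨ Btw a x b

/-- `ℓ` is the Conway–Coxeter labelling of the vertices based at `i` : the vertex `i`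
is labelled `0`, every vertex joined to `i` by an edge (of `T`, or a boundary edge)
is labelled `1`, and in each triangle the vertex on the far side from `i` is labelled
by the sum of the labels of the other two vertices.  The label `ℓ j` is then the
Conway–Coxeter frieze entry `(i,j)`. -/
def IsCCLabel {N : ℕ} (T : Triang N) (i : Vx N) (ℓ : Vx N → ℕ) : Prop :=
  ℓ i = 0 ∧ (∀ j, Joined T i j → ℓ j = 1) ∧
  ∀ a p q, IsUTri T (a, p, q) →
    (InCWArc (a + ((p + q : ℕ) : Vx N)) i a →
      ℓ (a + (p : Vx N)) = ℓ a + ℓ (a + ((p + q : ℕ) : Vx N))) ∧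
    (InCWArc a i (a + (p : Vx N)) →
      ℓ (a + ((p + q : ℕ) : Vx N)) = ℓ a + ℓ (a + (p : Vx N))) ∧
    (InCWArc (a + (p : Vx N)) i (a + ((p + q : ℕ) : Vx N)) →
      ℓ a = ℓ (a + (p : Vx N)) + ℓ (a + ((p + q : ℕ) : Vx N)))

section Geometry

variable {N : ℕ}

/-- clockwise distance from `a` to `b`. -/
def arc (a b : Vx N) : ℕ := (b - a).val

lemma arc_lt [NeZero N] (a b : Vx N) : arc a b < N := ZMod.val_lt _

lemma arc_eq_zero_iff [NeZero N] {a b : Vx N} : arc a b = 0 ↔ b = a := by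
  unfold arc
  rw [ZMod.val_eq_zero, sub_eq_zero]

lemma arc_tri [NeZero N] (a b c : Vx N) :
    arc a b + arc b c = arc a c ∨ arc a b + arc b c = arc a c + N := by
  have h : arc a c = (arc a b + arc b c) % N := by
    have h2 : c - a = (b - a) + (c - b) := by ring
    rw [arc, h2, ZMod.val_add]; rfl
  have h1 := arc_lt (N := N) a b
  have h2 := arc_lt (N := N) b c
  rcases Nat.lt_or_ge (arc a b + arc b c) N with h3 | h3
  · left; rw [h, Nat.mod_eq_of_lt h3]
  · right
    have h4 : arc a b + arc b c - N < N := by omega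
    rw [h, Nat.mod_eq_sub_mod h3, Nat.mod_eq_of_lt h4]
    omega

lemma arc_pair [NeZero N] (a b : Vx N) :
    (arc a b = 0 ∧ arc b a = 0) ∨ arc a b + arc b a = N := by
  have h := arc_tri (N := N) a b a
  have h0 : arc a a = 0 := by rw [arc_eq_zero_iff]
  rcases h with h | h
  · left; omega
  · right; omega

lemma btw_iff [NeZero N] {a x b : Vx N} :
    Btw a x b ↔ 0 < arc a x ∧ arc a x < arc a b := Iff.rfl

/-- crossing of chord (a,b) with chord (u,v), one fixed orientation -/
def Cr (a b u v : Vx N) : Prop := Btw a u b ∧ Btw b v a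

lemma dcross_iff {p q : Vx N × Vx N} :
    DCross p q ↔ Cr p.1 p.2 q.1 q.2 ∨ Cr p.1 p.2 q.2 q.1 := Iff.rfl

lemma cr_flip₁ {a b u v : Vx N} (h : Cr a b u v) : Cr b a v u := ⟨h.2, h.1⟩

lemma val_sub_eq_arc (x y : Vx N) : (x - y).val = arc y x := rfl

lemma cr_swap [NeZero N] {a b u v : Vx N} (h : Cr a b u v) : Cr u v b a := by
  obtain ⟨⟨h1, h2⟩, h3, h4⟩ := h
  unfold Cr Btw at *
  simp only [val_sub_eq_arc] at *
  have t1 := arc_tri (N := N) a u b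
  have t2 := arc_tri (N := N) a b v
  have t3 := arc_tri (N := N) a u v
  have t4 := arc_tri (N := N) a u b
  have p1 := arc_pair (N := N) a b
  have p2 := arc_pair (N := N) a u
  have p3 := arc_pair (N := N) a v
  have p4 := arc_pair (N := N) u v
  have p5 := arc_pair (N := N) u b
  have p6 := arc_pair (N := N) v a
  have t5 := arc_tri (N := N) u b v
  have t6 := arc_tri (N := N) v a u
  have l1 := arc_lt (N := N) a b
  have l2 := arc_lt (N := N) a u
  have l3 := arc_lt (N := N) a v
  have l4 := arc_lt (N := N) u b
  have l5 := arc_lt (N := N) u v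
  have l6 := arc_lt (N := N) v a
  have l7 := arc_lt (N := N) b v
  have l8 := arc_lt (N := N) b a
  have l9 := arc_lt (N := N) v u
  constructor <;> constructor <;> omega

lemma not_btw_both [NeZero N] {x v y : Vx N} (h1 : Btw x v y) (h2 : Btw y v x) : False := by
  unfold Btw at *
  simp only [val_sub_eq_arc] at *
  have p1 := arc_pair (N := N) x y
  have p2 := arc_pair (N := N) x v
  have t1 := arc_tri (N := N) x v y
  have t2 := arc_tri (N := N) y v x
  have p3 := arc_pair (N := N) v y
  omega

lemma side_or [NeZero N] {x y v : Vx N} (hxy : x ≠ y) (hvx : v ≠ x) (hvy : v ≠ y) :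
    Btw x v y ∨ Btw y v x := by
  unfold Btw
  simp only [val_sub_eq_arc]
  have t1 := arc_tri (N := N) x v y
  have p1 := arc_pair (N := N) x y
  have p2 := arc_pair (N := N) x v
  have p3 := arc_pair (N := N) v y
  have e1 : ¬ (arc x v = 0) := fun h => hvx (by rwa [arc_eq_zero_iff] at h)
  have e2 : ¬ (arc v y = 0) := fun h => hvy ((by rwa [arc_eq_zero_iff] at h : y = v)).symm
  have e3 : ¬ (arc x y = 0) := fun h => hxy ((by rwa [arc_eq_zero_iff] at h : y = x)).symm
  have e4 : ¬ (arc y v = 0) := fun h => hvy (by rwa [arc_eq_zero_iff] at h)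
  have e5 : ¬ (arc y x = 0) := fun h => hxy (by rwa [arc_eq_zero_iff] at h)
  have t2 := arc_tri (N := N) y v x
  have p4 := arc_pair (N := N) v x
  have l1 := arc_lt (N := N) x v
  have l2 := arc_lt (N := N) x y
  have l3 := arc_lt (N := N) y v
  have l4 := arc_lt (N := N) y x
  have l5 := arc_lt (N := N) v y
  have l6 := arc_lt (N := N) v x
  omega

lemma not_cr_bdry [NeZero N] (hN : 3 ≤ N) {a u v : Vx N} : ¬ Cr a (a + 1) u v := by
  rintro ⟨⟨h1, h2⟩, -⟩
  have harc : arc a (a + 1) = 1 := by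
    haveI : Fact (1 < N) := ⟨by omega⟩
    show ((a + 1) - a).val = 1
    simp [ZMod.val_one]
  simp only [val_sub_eq_arc] at h1 h2
  omega

end Geometry
section Chords

variable {N : ℕ}

/-- An edge of the triangulated polygon, as an unordered chord. -/
def Chord (T : Triang N) (x y : Vx N) : Prop :=
  y = x + 1 ∨ x = y + 1 ∨ MemD T x y

lemma chord_symm {T : Triang N} {x y : Vx N} (h : Chord T x y) : Chord T y x := by
  rcases h with h | h | h
  · exact Or.inr (Or.inl h)
  · exact Or.inl h
  · exact Or.inr (Or.inr (h.elim (fun h' => Or.inr h') (fun h' => Or.inl h')))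

lemma cr_flip₂ {a b u v : Vx N} (h : Cr a b u v) : Cr b a v u := ⟨h.2, h.1⟩

lemma chord_not_cr [NeZero N] (hN : 3 ≤ N) {T : Triang N} {x y u v : Vx N}
    (hx : Chord T x y) (hu : Chord T u v) : ¬ Cr x y u v := by
  intro hcr
  -- first reduce boundary cases
  rcases hx with h | h | h
  · subst h; exact not_cr_bdry hN hcr
  · exact not_cr_bdry hN (cr_flip₂ (h ▸ hcr))
  rcases hu with h' | h' | h'
  · subst h'; exact not_cr_bdry hN (cr_swap hcr)
  · exact not_cr_bdry hN (cr_flip₂ (h' ▸ cr_swap hcr))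
  -- both diagonals
  rcases h with h | h <;> rcases h' with h' | h'
  · exact T.noncross _ h _ h' (Or.inl hcr)
  · exact T.noncross _ h _ h' (Or.inr hcr)
  · exact T.noncross _ h _ h' (Or.inr (cr_flip₂ hcr))
  · exact T.noncross _ h _ h' (Or.inl (cr_flip₂ hcr))

end Chords
section TriChord

variable {N : ℕ}

lemma utri_third (hN : 3 ≤ N) [NeZero N] {T : Triang N} {t : Vx N × ℕ × ℕ}
    (ht : IsUTri T t) :
    (t.1 + ((t.2.1 + t.2.2 : ℕ) : Vx N)) + ((N - t.2.1 - t.2.2 : ℕ) : Vx N) = t.1 := by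
  obtain ⟨h1, h2, h3, -⟩ := ht
  have hle : t.2.1 + t.2.2 ≤ N := by omega
  have : ((N - t.2.1 - t.2.2 : ℕ) : Vx N) = (N : Vx N) - ((t.2.1 + t.2.2 : ℕ) : Vx N) := by
    have : (N - t.2.1 - t.2.2 : ℕ) = N - (t.2.1 + t.2.2) := by omega
    rw [this, Nat.cast_sub hle]
  rw [this]
  have hz : (N : Vx N) = 0 := ZMod.natCast_self N
  rw [hz]
  ring

lemma inc_chord (hN : 3 ≤ N) [NeZero N] {T : Triang N} {t : Vx N × ℕ × ℕ}
    (ht : IsUTri T t) {v w : Vx N} (hv : UInc v t) (hw : UInc w t) (hvw : v ≠ w) :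
    Chord T v w := by
  obtain ⟨a, p, q⟩ := t
  obtain ⟨h1, h2, h3, hs1, hs2, hs3, hc1, hc2⟩ := ht
  have third := utri_third hN (T := T) (t := (a, p, q)) ⟨h1, h2, h3, hs1, hs2, hs3, hc1, hc2⟩
  simp only at *
  have hpq : a + ((p + q : ℕ) : Vx N) = a + (p : Vx N) + (q : Vx N) := by
    push_cast; ring
  have side_chord : ∀ (x : Vx N) (d : ℕ), USide T x d → Chord T x (x + (d : Vx N)) := by
    intro x d hside
    rcases hside with h | h
    · subst h; left; push_cast; ring
    · right; right; exact h
  have C1 : Chord T a (a + (p : Vx N)) := side_chord a p hs1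
  have C2 : Chord T (a + (p : Vx N)) (a + ((p + q : ℕ) : Vx N)) := by
    have := side_chord (a + (p : Vx N)) q hs2
    rwa [hpq]
  have C3 : Chord T (a + ((p + q : ℕ) : Vx N)) a := by
    have := side_chord (a + ((p + q : ℕ) : Vx N)) (N - p - q) hs3
    rwa [third] at this
  rcases hv with hv | hv | hv <;> rcases hw with hw | hw | hw <;>
    subst hv <;> subst hw <;>
    first
      | exact absurd rfl hvw
      | exact C1 | exact chord_symm C1
      | exact C2 | exact chord_symm C2
      | exact C3 | exact chord_symm C3

end TriChord
section Separation

variable {N : ℕ} [NeZero N]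

lemma btw_ne {a v b : Vx N} (h : Btw a v b) : v ≠ a ∧ v ≠ b ∧ a ≠ b := by
  obtain ⟨h1, h2⟩ := h
  simp only [val_sub_eq_arc] at h1 h2
  refine ⟨?_, ?_, ?_⟩ <;> rintro rfl
  · rw [show arc v v = 0 from by rw [arc_eq_zero_iff]] at h1; omega
  · omega
  · rw [show arc a a = 0 from by rw [arc_eq_zero_iff]] at h2; omega

lemma walk_ivt {w : ℕ → Vx N} {x y : Vx N} :
    ∀ (m : ℕ), Btw y (w 0) x → Btw x (w m) y → (∀ s ≤ m, w s ≠ x ∧ w s ≠ y) →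
    ∃ s < m, Btw y (w s) x ∧ Btw x (w (s + 1)) y := by
  intro m
  induction m with
  | zero => intro h0 h1 _; exact absurd h1 (fun h => not_btw_both h h0)
  | succ m ih =>
    intro h0 h1 havoid
    by_cases hm : Btw y (w m) x
    · exact ⟨m, Nat.lt_succ_self m, hm, h1⟩
    · have hne := havoid m (Nat.le_succ m)
      have := side_or (x := x) (y := y) ((btw_ne h0).2.2.symm) hne.1 hne.2
      rcases this with hside | hside
      · obtain ⟨s, hs, h⟩ := ih h0 hside (fun s hs => havoid s (Nat.le_succ_of_le hs))
        exact ⟨s, Nat.lt_succ_of_lt hs, h⟩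
      · exact absurd hside hm

end Separation
section SeparationProof

variable {N : ℕ} [NeZero N]

/-- Two vertex-disjoint triangle-walks cannot connect the interleaved pairs
`a ↔ c` and `b ↔ d` when `a, b, c, d` are in strict cyclic order. -/
lemma separation (hN : 3 ≤ N) {T : Triang N} {a b c d : Vx N}
    (hab : Btw a b c) (hcd : Btw a c d)
    {v u : ℕ → Vx N} {m n : ℕ}
    (hv0 : v 0 = a) (hvm : v m = c)
    (hu0 : u 0 = b) (hun : u n = d)
    (hvstep : ∀ s < m, v s = v (s + 1) ∨
      ∃ t, IsUTri T t ∧ UInc (v s) t ∧ UInc (v (s + 1)) t)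
    (hustep : ∀ s < n, u s = u (s + 1) ∨
      ∃ t, IsUTri T t ∧ UInc (u s) t ∧ UInc (u (s + 1)) t)
    (hdisj : ∀ s ≤ m, ∀ r ≤ n, v s ≠ u r) : False := by
  have hb0 : Btw d a b := by
    unfold Btw at *
    simp only [val_sub_eq_arc] at *
    have p1 := arc_pair (N := N) a d
    have t1 := arc_tri (N := N) d a b
    have l1 := arc_lt (N := N) d b
    have l2 := arc_lt (N := N) a d
    have l3 := arc_lt (N := N) a b
    omega
  have hbm : Btw b c d := by
    unfold Btw at *
    simp only [val_sub_eq_arc] at *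
    have t1 := arc_tri (N := N) a b c
    have t2 := arc_tri (N := N) a b d
    have l1 := arc_lt (N := N) b c
    have l2 := arc_lt (N := N) b d
    have l3 := arc_lt (N := N) a d
    have l4 := arc_lt (N := N) a c
    omega
  have havoid : ∀ s ≤ m, v s ≠ b ∧ v s ≠ d := fun s hs =>
    ⟨hu0 ▸ hdisj s hs 0 (Nat.zero_le n), hun ▸ hdisj s hs n le_rfl⟩
  obtain ⟨s, hsm, hside1, hside2⟩ :=
    walk_ivt (w := v) (x := b) (y := d) m (hv0 ▸ hb0) (hvm ▸ hbm) havoid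
  have hne : v s ≠ v (s + 1) := fun h => not_btw_both hside2 (h ▸ hside1)
  obtain ⟨t, ht, hi1, hi2⟩ := (hvstep s hsm).resolve_left hne
  have hchord1 : Chord T (v (s + 1)) (v s) := inc_chord hN ht hi2 hi1 hne.symm
  have hcr : Cr b d (v (s + 1)) (v s) := ⟨hside2, hside1⟩
  have hcr2 := cr_swap hcr
  obtain ⟨hside3, hside4⟩ := hcr2
  -- hside3 : Btw (v (s+1)) d (v s), hside4 : Btw (v s) b (v (s+1))
  have havoid2 : ∀ r ≤ n, u r ≠ v (s + 1) ∧ u r ≠ v s := fun r hr =>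
    ⟨fun h => hdisj (s + 1) hsm r hr h.symm,
     fun h => hdisj s (le_of_lt hsm) r hr h.symm⟩
  obtain ⟨r, hrn, hside5, hside6⟩ :=
    walk_ivt (w := u) (x := v (s + 1)) (y := v s) n (hu0 ▸ hside4) (hun ▸ hside3) havoid2
  have hne2 : u r ≠ u (r + 1) := fun h => not_btw_both hside6 (h ▸ hside5)
  obtain ⟨t', ht', hj1, hj2⟩ := (hustep r hrn).resolve_left hne2
  have hchord2 : Chord T (u (r + 1)) (u r) := inc_chord hN ht' hj2 hj1 hne2.symm
  exact chord_not_cr hN hchord1 hchord2 ⟨hside6, hside5⟩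

end SeparationProof
section TriCount

variable {N : ℕ} [NeZero N]

lemma arc_spec (x y : Vx N) : x.val + arc x y = y.val ∨ x.val + arc x y = y.val + N := by
  have h : (x + (y - x)).val = y.val := by congr 1; ring
  rw [ZMod.val_add] at h
  have h2 : (y - x).val = arc x y := rfl
  rw [h2] at h
  have l1 := arc_lt (N := N) x y
  have l2 := ZMod.val_lt x
  have l3 := ZMod.val_lt y
  rcases Nat.lt_or_ge (x.val + arc x y) N with h3 | h3
  · left; rw [Nat.mod_eq_of_lt h3] at h; omega
  · right
    rw [Nat.mod_eq_sub_mod h3, Nat.mod_eq_of_lt (by omega)] at h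
    omega

lemma val_add_cast {a : Vx N} {p : ℕ} (hp : p < N) (h : a.val < (a + (p : Vx N)).val) :
    (a + (p : Vx N)).val = a.val + p := by
  have h1 : (a + (p : Vx N)).val = (a.val + p) % N := by
    rw [ZMod.val_add, ZMod.val_cast_of_lt hp]
  have l1 := ZMod.val_lt a
  rcases Nat.lt_or_ge (a.val + p) N with h3 | h3
  · rw [Nat.mod_eq_of_lt h3] at h1; omega
  · rw [Nat.mod_eq_sub_mod h3, Nat.mod_eq_of_lt (by omega)] at h1
    omega

lemma utri_vals (hN : 3 ≤ N) {T : Triang N} {a : Vx N} {p q : ℕ}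
    (ht : IsUTri T (a, p, q)) :
    (a + (p : Vx N)).val = a.val + p ∧
    (a + ((p + q : ℕ) : Vx N)).val = a.val + (p + q) ∧
    1 ≤ p ∧ 1 ≤ q ∧ a.val + p + q ≤ N - 1 := by
  obtain ⟨h1, h2, h3, -, -, -, hc1, hc2⟩ := ht
  dsimp only at h1 h2 h3 hc1 hc2
  have hp : p < N := by omega
  have hpq : p + q < N := by omega
  have e1 := val_add_cast hp hc1
  have e2 := val_add_cast hpq hc2
  have l := ZMod.val_lt (a + ((p + q : ℕ) : Vx N))
  exact ⟨e1, e2, h1, h2, by omega⟩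

/-- the "middle" vertex of a canonical triangle -/
def mid (t : Vx N × ℕ × ℕ) : Vx N := t.1 + (t.2.1 : Vx N)

lemma mid_inj_aux (hN : 3 ≤ N) {T : Triang N} {a a' : Vx N} {p q p' q' : ℕ}
    (ht : IsUTri T (a, p, q)) (ht' : IsUTri T (a', p', q'))
    (hmid : a + (p : Vx N) = a' + (p' : Vx N))
    (hlt : a.val < a'.val) : False := by
  obtain ⟨e1, e2, hp, hq, hb⟩ := utri_vals hN ht
  obtain ⟨e1', e2', hp', hq', hb'⟩ := utri_vals hN ht'
  have hmv := congrArg ZMod.val hmid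
  have hC1 : Chord T a (a + (p : Vx N)) :=
    inc_chord hN ht (Or.inl rfl) (Or.inr (Or.inl rfl))
      (by intro h; rw [← h] at e1; omega)
  have hC2 : Chord T a' (a' + ((p' + q' : ℕ) : Vx N)) :=
    inc_chord hN ht' (Or.inl rfl) (Or.inr (Or.inr rfl))
      (by intro h; rw [← h] at e2'; omega)
  refine chord_not_cr hN hC1 hC2 ⟨?_, ?_⟩ <;>
    · unfold Btw
      simp only [val_sub_eq_arc]
      have s1 := arc_spec (N := N) a a'
      have s2 := arc_spec (N := N) a (a + (p : Vx N))
      have s3 := arc_spec (N := N) (a + (p : Vx N)) (a' + ((p' + q' : ℕ) : Vx N))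
      have s4 := arc_spec (N := N) (a + (p : Vx N)) a
      have l1 := arc_lt (N := N) a a'
      have l2 := arc_lt (N := N) a (a + (p : Vx N))
      have l3 := arc_lt (N := N) (a + (p : Vx N)) (a' + ((p' + q' : ℕ) : Vx N))
      have l4 := arc_lt (N := N) (a + (p : Vx N)) a
      omega

lemma mid_inj_aux2 (hN : 3 ≤ N) {T : Triang N} {a : Vx N} {p q p' q' : ℕ}
    (ht : IsUTri T (a, p, q)) (ht' : IsUTri T (a, p', q'))
    (hmid : a + (p : Vx N) = a + (p' : Vx N))
    (hlt : q < q') (hpp : p = p') : False := by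
  subst hpp
  obtain ⟨e1, e2, hp, hq, hb⟩ := utri_vals hN ht
  obtain ⟨e1', e2', hp', hq', hb'⟩ := utri_vals hN ht'
  have hC1 : Chord T (a + (p : Vx N)) (a + ((p + q' : ℕ) : Vx N)) :=
    inc_chord hN ht' (Or.inr (Or.inl rfl)) (Or.inr (Or.inr rfl))
      (by intro h; rw [h] at e1'; omega)
  have hC2 : Chord T (a + ((p + q : ℕ) : Vx N)) a :=
    inc_chord hN ht (Or.inr (Or.inr rfl)) (Or.inl rfl)
      (by intro h; rw [h] at e2; omega)
  refine chord_not_cr hN hC1 hC2 ⟨?_, ?_⟩ <;>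
    · unfold Btw
      simp only [val_sub_eq_arc]
      have s1 := arc_spec (N := N) (a + (p : Vx N)) (a + ((p + q : ℕ) : Vx N))
      have s2 := arc_spec (N := N) (a + (p : Vx N)) (a + ((p + q' : ℕ) : Vx N))
      have s3 := arc_spec (N := N) (a + ((p + q' : ℕ) : Vx N)) a
      have s4 := arc_spec (N := N) (a + ((p + q' : ℕ) : Vx N)) (a + (p : Vx N))
      have l1 := arc_lt (N := N) (a + (p : Vx N)) (a + ((p + q : ℕ) : Vx N))
      have l2 := arc_lt (N := N) (a + (p : Vx N)) (a + ((p + q' : ℕ) : Vx N))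
      have l3 := arc_lt (N := N) (a + ((p + q' : ℕ) : Vx N)) a
      have l4 := arc_lt (N := N) (a + ((p + q' : ℕ) : Vx N)) (a + (p : Vx N))
      omega

lemma mid_inj (hN : 3 ≤ N) {T : Triang N} {t t' : Vx N × ℕ × ℕ}
    (ht : IsUTri T t) (ht' : IsUTri T t') (hmid : mid t = mid t') : t = t' := by
  obtain ⟨a, p, q⟩ := t
  obtain ⟨a', p', q'⟩ := t'
  have hmid' : a + (p : Vx N) = a' + (p' : Vx N) := hmid
  obtain ⟨e1, e2, hp, hq, hb⟩ := utri_vals hN ht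
  obtain ⟨e1', e2', hp', hq', hb'⟩ := utri_vals hN ht'
  have hmv := congrArg ZMod.val hmid'
  rcases lt_trichotomy a.val a'.val with h | h | h
  · exact absurd (mid_inj_aux hN ht ht' hmid' h) (by simp)
  · have ha : a = a' := ZMod.val_injective N h
    subst ha
    have hpp : p = p' := by omega
    rcases lt_trichotomy q q' with h2 | h2 | h2
    · exact absurd (mid_inj_aux2 hN ht ht' hmid' h2 hpp) (by simp)
    · subst hpp; subst h2; rfl
    · exact absurd (mid_inj_aux2 hN ht' ht hmid'.symm h2 hpp.symm) (by simp)
  · exact absurd (mid_inj_aux hN ht' ht hmid'.symm h) (by simp)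

/-- the triangles of `T`, as a finite set -/
def TriF (T : Triang N) : Finset (Vx N × ℕ × ℕ) :=
  ((Finset.univ : Finset (Vx N)) ×ˢ Finset.range N ×ˢ Finset.range N).filter (IsUTri T)

lemma mem_TriF (hN : 3 ≤ N) {T : Triang N} {t : Vx N × ℕ × ℕ} :
    t ∈ TriF T ↔ IsUTri T t := by
  unfold TriF
  rw [Finset.mem_filter]
  constructor
  · exact fun h => h.2
  · intro h
    refine ⟨?_, h⟩
    obtain ⟨h1, h2, h3, -⟩ := h
    simp only [Finset.mem_product, Finset.mem_univ, Finset.mem_range, true_and]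
    omega

lemma TriF_card (hN : 3 ≤ N) (T : Triang N) : (TriF T).card ≤ N - 2 := by
  classical
  have key : ∀ t ∈ TriF T, mid t ∈
      ((Finset.univ : Finset (Vx N)).erase 0).erase ((N - 1 : ℕ) : Vx N) := by
    intro t ht
    rw [mem_TriF hN] at ht
    obtain ⟨a, p, q⟩ := t
    obtain ⟨e1, e2, hp, hq, hb⟩ := utri_vals hN ht
    have hv : (mid (a, p, q)).val = a.val + p := e1
    rw [Finset.mem_erase, Finset.mem_erase]
    refine ⟨?_, ?_, Finset.mem_univ _⟩
    · intro h
      have : (mid (a, p, q)).val = N - 1 := by rw [h, ZMod.val_cast_of_lt (by omega)]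
      omega
    · intro h
      have : (mid (a, p, q)).val = 0 := by rw [h]; exact ZMod.val_zero
      omega
  have hinj : ∀ t ∈ TriF T, ∀ t' ∈ TriF T, mid t = mid t' → t = t' := by
    intro t ht t' ht' h
    exact mid_inj hN ((mem_TriF hN).1 ht) ((mem_TriF hN).1 ht') h
  have := Finset.card_le_card_of_injOn mid key hinj
  have hcard : (((Finset.univ : Finset (Vx N)).erase 0).erase ((N - 1 : ℕ) : Vx N)).card
      = N - 2 := by
    rw [Finset.card_erase_of_mem, Finset.card_erase_of_mem (Finset.mem_univ _)]
    · have : (Finset.univ : Finset (Vx N)).card = N := by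
        rw [Finset.card_univ, ZMod.card]
      omega
    · rw [Finset.mem_erase]
      refine ⟨?_, Finset.mem_univ _⟩
      intro h
      have : ((N - 1 : ℕ) : Vx N).val = 0 := by rw [h]; exact ZMod.val_zero
      rw [ZMod.val_cast_of_lt (by omega)] at this
      omega
  omega

end TriCount
set_option linter.unusedSectionVars false

section Matchings

variable {N : ℕ} [NeZero N]

/-- junk value -/
def Jk : Vx N × ℕ × ℕ := (0, 0, 0)

lemma not_isUTri_Jk {T : Triang N} : ¬ IsUTri T (Jk : Vx N × ℕ × ℕ) := by
  rintro ⟨h1, -⟩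
  exact absurd h1 (by norm_num [Jk])

/-- Matchings of all vertices except `x, y`, encoded as total functions with junk
value at `x` and `y`. -/
def ES (T : Triang N) (x y : Vx N) : Set (Vx N → Vx N × ℕ × ℕ) :=
  {F | F x = Jk ∧ F y = Jk ∧
    (∀ v, v ≠ x → v ≠ y → IsUTri T (F v) ∧ UInc v (F v)) ∧
    Set.InjOn F {v | v ≠ x ∧ v ≠ y}}

lemma ES_symm {T : Triang N} (x y : Vx N) : ES T x y = ES T y x := by
  unfold ES
  ext F
  constructor <;> rintro ⟨h1, h2, h3, h4⟩ <;>
    exact ⟨h2, h1, fun v hv1 hv2 => h3 v hv2 hv1,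
      fun v hv w hw h => h4 (by exact ⟨hv.2, hv.1⟩) (by exact ⟨hw.2, hw.1⟩) h⟩

lemma ES_ne_Jk {T : Triang N} {x y : Vx N} {F : Vx N → Vx N × ℕ × ℕ}
    (hF : F ∈ ES T x y) {v : Vx N} (h1 : v ≠ x) (h2 : v ≠ y) : F v ≠ Jk := by
  intro h
  exact not_isUTri_Jk (T := T) (h ▸ (hF.2.2.1 v h1 h2).1)

lemma ES_eq_Jk_iff {T : Triang N} {x y : Vx N} {F : Vx N → Vx N × ℕ × ℕ}
    (hF : F ∈ ES T x y) {v : Vx N} : F v = Jk ↔ v = x ∨ v = y := by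
  constructor
  · intro h
    by_contra hc
    push_neg at hc
    exact ES_ne_Jk hF hc.1 hc.2 h
  · rintro (rfl | rfl)
    · exact hF.1
    · exact hF.2.1

lemma mem_sdiff_pair {x y v : Vx N} :
    v ∈ (Finset.univ \ {x, y} : Finset (Vx N)) ↔ v ≠ x ∧ v ≠ y := by
  simp [Finset.mem_sdiff]

lemma nMatch_eq (T : Triang N) {x y : Vx N} (hxy : x ≠ y) :
    nMatch T x y = (ES T x y).ncard := by
  unfold nMatch UMatch UMatchIn
  rw [← Nat.card_coe_set_eq, ← Nat.card_coe_set_eq]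
  apply Nat.card_congr
  refine ⟨fun ⟨f, hf⟩ => ⟨fun v => if h : v ≠ x ∧ v ≠ y then
      f ⟨v, mem_sdiff_pair.2 h⟩ else Jk, ?_⟩,
    fun ⟨F, hF⟩ => ⟨fun v => F v.1, ?_⟩, ?_, ?_⟩
  · obtain ⟨hinj, hval⟩ := hf
    refine ⟨by simp, by simp, ?_, ?_⟩
    · intro v hv1 hv2
      dsimp only
      rw [dif_pos ⟨hv1, hv2⟩]
      have hv' : (⟨v, mem_sdiff_pair.2 ⟨hv1, hv2⟩⟩ : {w // w ∈ Finset.univ \ {x, y}}) = 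
        ⟨v, mem_sdiff_pair.2 ⟨hv1, hv2⟩⟩ := rfl
      exact ⟨(hval ⟨v, mem_sdiff_pair.2 ⟨hv1, hv2⟩⟩).1,
        (hval ⟨v, mem_sdiff_pair.2 ⟨hv1, hv2⟩⟩).2.2⟩
    · intro v hv w hw h
      dsimp only at h
      have hv' : v ≠ x ∧ v ≠ y := hv
      have hw' : w ≠ x ∧ w ≠ y := hw
      rw [dif_pos hv', dif_pos hw'] at h
      exact congrArg Subtype.val (hinj h)
  · obtain ⟨h1, h2, h3, h4⟩ := hF
    constructor
    · intro v w h
      apply Subtype.ext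
      have hv := mem_sdiff_pair.1 v.2
      have hw := mem_sdiff_pair.1 w.2
      exact h4 hv hw h
    · intro v
      have hv := mem_sdiff_pair.1 v.2
      exact ⟨(h3 v.1 hv.1 hv.2).1, Set.mem_univ _, (h3 v.1 hv.1 hv.2).2⟩
  · rintro ⟨f, hf⟩
    apply Subtype.ext
    funext v
    simp only
    rw [dif_pos (mem_sdiff_pair.1 v.2)]
  · rintro ⟨F, hF⟩
    apply Subtype.ext
    funext v
    simp only
    by_cases h : v ≠ x ∧ v ≠ y
    · rw [dif_pos h]
    · rw [dif_neg h]
      push_neg at h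
      by_cases hx : v = x
      · rw [hx, hF.1]
      · rw [h hx, hF.2.1]

lemma ES_finite {T : Triang N} (x y : Vx N) : (ES T x y).Finite := by
  have hN' : 0 < N := Nat.pos_of_ne_zero (NeZero.ne N)
  apply Set.Finite.subset (Set.Finite.pi (fun _ : Vx N =>
    (insert (Jk : Vx N × ℕ × ℕ) ↑(TriF T) : Set (Vx N × ℕ × ℕ)).toFinite))
  intro F hF
  rw [Set.mem_pi]
  intro v _
  by_cases h : v ≠ x ∧ v ≠ y
  · right
    have hut := (hF.2.2.1 v h.1 h.2).1
    unfold TriF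
    simp only [Finset.coe_filter, Set.mem_setOf_eq, Finset.mem_product,
      Finset.mem_univ, Finset.mem_range, true_and]
    obtain ⟨h1, h2, h3, -⟩ := hut
    exact ⟨⟨by omega, by omega⟩, (hF.2.2.1 v h.1 h.2).1⟩
  · left
    push_neg at h
    by_cases hx : v = x
    · rw [hx, hF.1]
    · rw [h hx, hF.2.1]

end Matchings
section Trajectory

variable {N : ℕ} [NeZero N] {T : Triang N}

lemma ES_surj (hN : 3 ≤ N) {x y : Vx N} (hxy : x ≠ y)
    {F : Vx N → Vx N × ℕ × ℕ} (hF : F ∈ ES T x y)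
    {t : Vx N × ℕ × ℕ} (ht : IsUTri T t) :
    ∃ v, (v ≠ x ∧ v ≠ y) ∧ F v = t := by
  classical
  have hsub : (Finset.univ \ {x, y} : Finset (Vx N)).image F ⊆ TriF T := by
    intro t' ht'
    rw [Finset.mem_image] at ht'
    obtain ⟨v, hv, rfl⟩ := ht'
    have hv' := mem_sdiff_pair.1 hv
    exact (mem_TriF hN).2 (hF.2.2.1 v hv'.1 hv'.2).1
  have hcard : ((Finset.univ \ {x, y} : Finset (Vx N)).image F).card = N - 2 := by
    rw [Finset.card_image_of_injOn (fun v hv w hw h =>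
      hF.2.2.2 (mem_sdiff_pair.1 hv) (mem_sdiff_pair.1 hw) h)]
    rw [Finset.card_sdiff_of_subset (Finset.subset_univ _), Finset.card_univ, ZMod.card,
      Finset.card_insert_of_notMem (by simpa using hxy), Finset.card_singleton]
  have heq := Finset.eq_of_subset_of_card_le hsub (by rw [hcard]; exact TriF_card hN T)
  have : t ∈ (Finset.univ \ {x, y} : Finset (Vx N)).image F := by
    rw [heq]; exact (mem_TriF hN).2 ht
  rw [Finset.mem_image] at this
  obtain ⟨v, hv, h⟩ := this
  exact ⟨v, mem_sdiff_pair.1 hv, h⟩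

/-- the successor map of the superposition walk -/
def nxt (A B : Vx N → Vx N × ℕ × ℕ) (v : Vx N) : Vx N :=
  if h : ∃ u, A u ≠ Jk ∧ A u = B v then h.choose else v

/-- the superposition walk starting at `v₀` -/
def trj (A B : Vx N → Vx N × ℕ × ℕ) (v₀ : Vx N) (s : ℕ) : Vx N :=
  (nxt A B)^[s] v₀

/-- the stopping time of the walk -/
def stopT (A B : Vx N → Vx N × ℕ × ℕ) (v₀ : Vx N) : ℕ :=
  sInf {s | B (trj A B v₀ s) = Jk}

lemma trj_zero {A B : Vx N → Vx N × ℕ × ℕ} {v₀ : Vx N} : trj A B v₀ 0 = v₀ := rfl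

lemma trj_succ {A B : Vx N → Vx N × ℕ × ℕ} {v₀ : Vx N} (s : ℕ) :
    trj A B v₀ (s + 1) = nxt A B (trj A B v₀ s) :=
  Function.iterate_succ_apply' _ _ _

variable {a₁ a₂ b₁ b₂ : Vx N} {A B : Vx N → Vx N × ℕ × ℕ}

lemma nxt_spec (hN : 3 ≤ N) (hA : A ∈ ES T a₁ a₂) (hB : B ∈ ES T b₁ b₂)
    (hab : a₁ ≠ a₂) {v : Vx N} (hv : B v ≠ Jk) :
    A (nxt A B v) = B v ∧ nxt A B v ≠ a₁ ∧ nxt A B v ≠ a₂ := by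
  have hvm : v ≠ b₁ ∧ v ≠ b₂ := by
    constructor <;> intro h <;> subst h
    · exact hv hB.1
    · exact hv hB.2.1
  have hut : IsUTri T (B v) := (hB.2.2.1 v hvm.1 hvm.2).1
  obtain ⟨u, ⟨hu1, hu2⟩, hu⟩ := ES_surj hN hab hA hut
  have hex : ∃ u, A u ≠ Jk ∧ A u = B v := ⟨u, ES_ne_Jk hA hu1 hu2, hu⟩
  unfold nxt
  rw [dif_pos hex]
  have hspec := hex.choose_spec
  have h1 : hex.choose ≠ a₁ ∧ hex.choose ≠ a₂ := by
    constructor <;> intro h <;> apply hspec.1 <;> rw [h]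
    · exact hA.1
    · exact hA.2.1
  exact ⟨hspec.2, h1.1, h1.2⟩

lemma nxt_unique (hA : A ∈ ES T a₁ a₂) {v u : Vx N} (hex : A (nxt A B v) = B v)
    (hn1 : nxt A B v ≠ a₁) (hn2 : nxt A B v ≠ a₂)
    (hu1 : u ≠ a₁) (hu2 : u ≠ a₂) (h : A u = B v) : u = nxt A B v :=
  hA.2.2.2 ⟨hu1, hu2⟩ ⟨hn1, hn2⟩ (h.trans hex.symm)

lemma stop_exists (hN : 3 ≤ N) (hA : A ∈ ES T a₁ a₂) (hB : B ∈ ES T b₁ b₂)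
    (hab : a₁ ≠ a₂) {v₀ : Vx N} (hv₀ : v₀ = a₁ ∨ v₀ = a₂) :
    ∃ s, B (trj A B v₀ s) = Jk := by
  by_contra hcon
  push_neg at hcon
  have hkey : ∀ s r : ℕ, trj A B v₀ s = trj A B v₀ r → s = r := by
    intro s
    induction s with
    | zero =>
      intro r h
      cases r with
      | zero => rfl
      | succ r =>
        exfalso
        rw [trj_succ] at h
        have := nxt_spec hN hA hB hab (hcon r)
        rcases hv₀ with rfl | rfl
        · exact this.2.1 (h ▸ rfl)
        · exact this.2.2 (h ▸ rfl)
    | succ s ih =>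
      intro r h
      cases r with
      | zero =>
        exfalso
        rw [trj_succ] at h
        have := nxt_spec hN hA hB hab (hcon s)
        rcases hv₀ with rfl | rfl
        · exact this.2.1 h
        · exact this.2.2 h
      | succ r =>
        rw [trj_succ, trj_succ] at h
        have hs := nxt_spec hN hA hB hab (hcon s)
        have hr := nxt_spec hN hA hB hab (hcon r)
        have hBeq : B (trj A B v₀ s) = B (trj A B v₀ r) := by
          rw [← hs.1, ← hr.1, h]
        have hms : trj A B v₀ s ≠ b₁ ∧ trj A B v₀ s ≠ b₂ := by
          constructor <;> intro hc <;> apply hcon s <;> rw [hc]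
          · exact hB.1
          · exact hB.2.1
        have hmr : trj A B v₀ r ≠ b₁ ∧ trj A B v₀ r ≠ b₂ := by
          constructor <;> intro hc <;> apply hcon r <;> rw [hc]
          · exact hB.1
          · exact hB.2.1
        have := hB.2.2.2 hms hmr hBeq
        rw [ih r this]
  have : Function.Injective (trj A B v₀) := fun s r h => hkey s r h
  obtain ⟨s, r, hsr, h⟩ := Finite.exists_ne_map_eq_of_infinite (trj A B v₀)
  exact hsr (hkey s r h)

lemma stop_mem (hN : 3 ≤ N) (hA : A ∈ ES T a₁ a₂) (hB : B ∈ ES T b₁ b₂)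
    (hab : a₁ ≠ a₂) {v₀ : Vx N} (hv₀ : v₀ = a₁ ∨ v₀ = a₂) :
    B (trj A B v₀ (stopT A B v₀)) = Jk :=
  Nat.sInf_mem (stop_exists hN hA hB hab hv₀)

lemma stop_min {v₀ : Vx N} {s : ℕ} (hs : s < stopT A B v₀) :
    B (trj A B v₀ s) ≠ Jk :=
  Nat.notMem_of_lt_sInf hs

end Trajectory
section Trajectory2

variable {N : ℕ} [NeZero N] {T : Triang N}
variable {a₁ a₂ b₁ b₂ : Vx N} {A B : Vx N → Vx N × ℕ × ℕ}

lemma trj_rel (hN : 3 ≤ N) (hA : A ∈ ES T a₁ a₂) (hB : B ∈ ES T b₁ b₂)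
    (hab : a₁ ≠ a₂) {v₀ : Vx N} {s : ℕ} (hs : s < stopT A B v₀) :
    A (trj A B v₀ (s + 1)) = B (trj A B v₀ s) ∧
    trj A B v₀ (s + 1) ≠ a₁ ∧ trj A B v₀ (s + 1) ≠ a₂ := by
  rw [trj_succ]
  exact nxt_spec hN hA hB hab (stop_min hs)

lemma trj_not_junkB (hB : B ∈ ES T b₁ b₂) {v₀ : Vx N} {s : ℕ}
    (hs : s < stopT A B v₀) :
    trj A B v₀ s ≠ b₁ ∧ trj A B v₀ s ≠ b₂ := by
  constructor <;> intro h <;> apply stop_min hs <;> rw [h]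
  · exact hB.1
  · exact hB.2.1

lemma trj_end (hN : 3 ≤ N) (hA : A ∈ ES T a₁ a₂) (hB : B ∈ ES T b₁ b₂)
    (hab : a₁ ≠ a₂) {v₀ : Vx N} (hv₀ : v₀ = a₁ ∨ v₀ = a₂) :
    trj A B v₀ (stopT A B v₀) = b₁ ∨ trj A B v₀ (stopT A B v₀) = b₂ :=
  (ES_eq_Jk_iff hB).1 (stop_mem hN hA hB hab hv₀)

lemma trj_ne_A (hN : 3 ≤ N) (hA : A ∈ ES T a₁ a₂) (hB : B ∈ ES T b₁ b₂)
    (hab : a₁ ≠ a₂) {v₀ : Vx N} {s : ℕ} (hs1 : 1 ≤ s) (hs : s ≤ stopT A B v₀) :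
    trj A B v₀ s ≠ a₁ ∧ trj A B v₀ s ≠ a₂ := by
  obtain ⟨s, rfl⟩ := Nat.exists_eq_add_of_le hs1
  rw [Nat.add_comm]
  exact (trj_rel hN hA hB hab (by omega)).2

/-- walks started at the two holes of `A` are vertex-disjoint -/
lemma trj_disj (hN : 3 ≤ N) (hA : A ∈ ES T a₁ a₂) (hB : B ∈ ES T b₁ b₂)
    (hab : a₁ ≠ a₂) :
    ∀ s ≤ stopT A B a₁, ∀ r ≤ stopT A B a₂, trj A B a₁ s ≠ trj A B a₂ r := by
  intro s
  induction s with
  | zero =>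
    intro _ r hr h
    rw [trj_zero] at h
    cases r with
    | zero => rw [trj_zero] at h; exact hab h
    | succ r =>
      exact (trj_ne_A hN hA hB hab (Nat.le_add_left 1 r) hr).1 h.symm
  | succ s ih =>
    intro hs r hr h
    cases r with
    | zero =>
      rw [trj_zero] at h
      exact (trj_ne_A hN hA hB hab (Nat.le_add_left 1 s) hs).2 h
    | succ r =>
      have hrel1 := trj_rel hN hA hB hab (v₀ := a₁) (s := s) (by omega)
      have hrel2 := trj_rel hN hA hB hab (v₀ := a₂) (s := r) (by omega)
      have hBeq : B (trj A B a₁ s) = B (trj A B a₂ r) := by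
        rw [← hrel1.1, ← hrel2.1, h]
      have hm1 := trj_not_junkB (A := A) hB (v₀ := a₁) (s := s) (by omega)
      have hm2 := trj_not_junkB (A := A) hB (v₀ := a₂) (s := r) (by omega)
      exact ih (by omega) r (by omega) (hB.2.2.2 hm1 hm2 hBeq)

lemma trj_inj (hN : 3 ≤ N) (hA : A ∈ ES T a₁ a₂) (hB : B ∈ ES T b₁ b₂)
    (hab : a₁ ≠ a₂) {v₀ : Vx N} (hv₀ : v₀ = a₁ ∨ v₀ = a₂) :
    ∀ s ≤ stopT A B v₀, ∀ r ≤ stopT A B v₀, trj A B v₀ s = trj A B v₀ r → s = r := by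
  intro s
  induction s with
  | zero =>
    intro _ r hr h
    cases r with
    | zero => rfl
    | succ r =>
      exfalso
      rw [trj_zero] at h
      have := trj_ne_A hN hA hB hab (Nat.le_add_left 1 r) hr
      rcases hv₀ with rfl | rfl
      · exact this.1 h.symm
      · exact this.2 h.symm
  | succ s ih =>
    intro hs r hr h
    cases r with
    | zero =>
      exfalso
      rw [trj_zero] at h
      have := trj_ne_A hN hA hB hab (Nat.le_add_left 1 s) hs
      rcases hv₀ with rfl | rfl
      · exact this.1 h
      · exact this.2 h
    | succ r =>
      have hrel1 := trj_rel hN hA hB hab (v₀ := v₀) (s := s) (by omega)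
      have hrel2 := trj_rel hN hA hB hab (v₀ := v₀) (s := r) (by omega)
      have hBeq : B (trj A B v₀ s) = B (trj A B v₀ r) := by
        rw [← hrel1.1, ← hrel2.1, h]
      have hm1 := trj_not_junkB (A := A) hB (v₀ := v₀) (s := s) (by omega)
      have hm2 := trj_not_junkB (A := A) hB (v₀ := v₀) (s := r) (by omega)
      rw [ih (by omega) r (by omega) (hB.2.2.2 hm1 hm2 hBeq)]

/-- the walk step property needed for the separation lemma -/
lemma trj_step (hN : 3 ≤ N) (hA : A ∈ ES T a₁ a₂) (hB : B ∈ ES T b₁ b₂)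
    (hab : a₁ ≠ a₂) {v₀ : Vx N} {s : ℕ} (hs : s < stopT A B v₀) :
    ∃ t, IsUTri T t ∧ UInc (trj A B v₀ s) t ∧ UInc (trj A B v₀ (s + 1)) t := by
  have hrel := trj_rel hN hA hB hab hs
  have hm := trj_not_junkB (A := A) hB hs
  refine ⟨B (trj A B v₀ s), (hB.2.2.1 _ hm.1 hm.2).1, (hB.2.2.1 _ hm.1 hm.2).2, ?_⟩
  rw [← hrel.1]
  exact (hA.2.2.1 _ hrel.2.1 hrel.2.2).2

/-- If the pairs `(a₁, bb)` and `(a₂, bo)` interleave, the walk from `a₁`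
cannot end at `bb`. -/
lemma endpoint_forced (hN : 3 ≤ N) (hA : A ∈ ES T a₁ a₂) (hB : B ∈ ES T b₁ b₂)
    (hab : a₁ ≠ a₂) (hbb : b₁ ≠ b₂) {bb bo : Vx N}
    (hbs : (bb = b₁ ∧ bo = b₂) ∨ (bb = b₂ ∧ bo = b₁))
    (hgeo1 : Btw a₁ a₂ bb) (hgeo2 : Btw a₁ bb bo) :
    trj A B a₁ (stopT A B a₁) ≠ bb := by
  intro hend
  have hend2 : trj A B a₂ (stopT A B a₂) = bo := by
    have he2 := trj_end hN hA hB hab (v₀ := a₂) (Or.inr rfl)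
    have hne := trj_disj hN hA hB hab (stopT A B a₁) le_rfl (stopT A B a₂) le_rfl
    rw [hend] at hne
    rcases hbs with ⟨rfl, rfl⟩ | ⟨rfl, rfl⟩
    · exact he2.resolve_left (fun h => hne h.symm)
    · exact he2.resolve_right (fun h => hne h.symm)
  exact separation hN hgeo1 hgeo2 (trj_zero) hend (trj_zero) hend2
    (fun s hs => Or.inr (trj_step hN hA hB hab hs))
    (fun s hs => Or.inr (trj_step hN hA hB hab hs))
    (trj_disj hN hA hB hab)

end Trajectory2
section Swap

variable {N : ℕ} [NeZero N] {T : Triang N}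
variable {j a₂ b₁ b₂ : Vx N} {A B : Vx N → Vx N × ℕ × ℕ}

/-- variant of `endpoint_forced` with the second walk reversed -/
lemma endpoint_forced' (hN : 3 ≤ N) (hA : A ∈ ES T j a₂) (hB : B ∈ ES T b₁ b₂)
    (hab : j ≠ a₂) {bb bo : Vx N}
    (hbs : (bb = b₁ ∧ bo = b₂) ∨ (bb = b₂ ∧ bo = b₁))
    (hgeo1 : Btw j bo bb) (hgeo2 : Btw j bb a₂) :
    trj A B j (stopT A B j) ≠ bb := by
  intro hend
  have hend2 : trj A B a₂ (stopT A B a₂) = bo := by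
    have he2 := trj_end hN hA hB hab (v₀ := a₂) (Or.inr rfl)
    have hne := trj_disj hN hA hB hab (stopT A B j) le_rfl (stopT A B a₂) le_rfl
    rw [hend] at hne
    rcases hbs with ⟨rfl, rfl⟩ | ⟨rfl, rfl⟩
    · exact he2.resolve_left (fun h => hne h.symm)
    · exact he2.resolve_right (fun h => hne h.symm)
  set M₂ := stopT A B a₂ with hM₂
  exact separation hN hgeo1 hgeo2 (v := trj A B j) (m := stopT A B j)
    (u := fun r => trj A B a₂ (M₂ - r)) (n := M₂)
    trj_zero hend (by simpa using hend2) (by simp [trj_zero])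
    (fun s hs => Or.inr (trj_step hN hA hB hab hs))
    (fun r hr => Or.inr (by
      obtain ⟨t, h1, h2, h3⟩ := trj_step hN hA hB hab (v₀ := a₂) (s := M₂ - r - 1)
        (by omega)
      have e1 : M₂ - r - 1 + 1 = M₂ - r := by omega
      rw [e1] at h3
      have e2 : M₂ - (r + 1) = M₂ - r - 1 := by omega
      rw [e2]
      exact ⟨t, h1, h3, h2⟩))
    (fun s hs r hr => trj_disj hN hA hB hab s hs (M₂ - r) (by omega))

/-- the vertex set of the walk from `j` -/
def Wset (A B : Vx N → Vx N × ℕ × ℕ) (j : Vx N) : Set (Vx N) :=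
  {v | ∃ s ≤ stopT A B j, trj A B j s = v}

/-- the two swapped matchings -/
def swapX (A B : Vx N → Vx N × ℕ × ℕ) (j : Vx N) : Vx N → Vx N × ℕ × ℕ :=
  fun v => if v ∈ Wset A B j then A v else B v

def swapY (A B : Vx N → Vx N × ℕ × ℕ) (j : Vx N) : Vx N → Vx N × ℕ × ℕ :=
  fun v => if v ∈ Wset A B j then B v else A v

lemma j_mem_W : j ∈ Wset A B j := ⟨0, Nat.zero_le _, rfl⟩

lemma e_mem_W : trj A B j (stopT A B j) ∈ Wset A B j := ⟨stopT A B j, le_rfl, rfl⟩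

lemma a₂_notMem_W (hN : 3 ≤ N) (hA : A ∈ ES T j a₂) (hB : B ∈ ES T b₁ b₂)
    (hab : j ≠ a₂) : a₂ ∉ Wset A B j := by
  rintro ⟨s, hs, h⟩
  cases s with
  | zero => exact hab h
  | succ s => exact (trj_ne_A hN hA hB hab (Nat.le_add_left 1 s) hs).2 h

lemma bo_notMem_W (hN : 3 ≤ N) (hA : A ∈ ES T j a₂) (hB : B ∈ ES T b₁ b₂)
    (hab : j ≠ a₂) {bo : Vx N} (hbo : bo = b₁ ∨ bo = b₂)
    (hne : bo ≠ trj A B j (stopT A B j)) : bo ∉ Wset A B j := by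
  rintro ⟨s, hs, h⟩
  rcases Nat.lt_or_ge s (stopT A B j) with h' | h'
  · have := trj_not_junkB (A := A) hB h'
    rcases hbo with rfl | rfl
    · exact this.1 h
    · exact this.2 h
  · have : s = stopT A B j := le_antisymm hs h'
    exact hne (by rw [← this, h])

end Swap
section SwapMem

variable {N : ℕ} [NeZero N] {T : Triang N}
variable {j a₂ b₁ b₂ : Vx N} {A B : Vx N → Vx N × ℕ × ℕ}

lemma swapX_mem (hN : 3 ≤ N) (hA : A ∈ ES T j a₂) (hB : B ∈ ES T b₁ b₂)
    (hab : j ≠ a₂) (hbb : b₁ ≠ b₂) {bo : Vx N}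
    (hbs : (trj A B j (stopT A B j) = b₁ ∧ bo = b₂) ∨
           (trj A B j (stopT A B j) = b₂ ∧ bo = b₁)) :
    swapX A B j ∈ ES T j bo := by
  set M := stopT A B j with hM
  set e := trj A B j M with he
  have hbo_ne_e : bo ≠ e := by
    rcases hbs with ⟨h1, rfl⟩ | ⟨h1, rfl⟩
    · exact fun h => hbb (h.trans h1).symm
    · exact fun h => hbb (h.trans h1)
  have hbo_not_W : bo ∉ Wset A B j :=
    bo_notMem_W hN hA hB hab (by rcases hbs with ⟨-, rfl⟩ | ⟨-, rfl⟩; exacts [Or.inr rfl, Or.inl rfl]) hbo_ne_e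
  have hW_elim : ∀ {v}, v ∈ Wset A B j → v ≠ j → ∃ s, 1 ≤ s ∧ s ≤ M ∧ trj A B j s = v := by
    rintro v ⟨s, hs, rfl⟩ hne
    cases s with
    | zero => exact absurd rfl hne
    | succ s => exact ⟨s + 1, Nat.le_add_left 1 s, hs, rfl⟩
  have hout_junkB : ∀ {v}, v ∉ Wset A B j → v ≠ bo → v ≠ b₁ ∧ v ≠ b₂ := by
    intro v hv hvbo
    have hve : v ≠ e := fun h => hv (h ▸ e_mem_W)
    rcases hbs with ⟨h1, rfl⟩ | ⟨h1, rfl⟩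
    · exact ⟨fun h => hve (by rw [h, h1]), hvbo⟩
    · exact ⟨hvbo, fun h => hve (by rw [h, h1])⟩
  refine ⟨?_, ?_, ?_, ?_⟩
  · show (if _ then A j else B j) = Jk
    rw [if_pos j_mem_W]; exact hA.1
  · show (if _ then A bo else B bo) = Jk
    rw [if_neg hbo_not_W]
    rcases hbs with ⟨-, rfl⟩ | ⟨-, rfl⟩
    · exact hB.2.1
    · exact hB.1
  · intro v hvj hvbo
    show IsUTri T (if _ then A v else B v) ∧ UInc v (if _ then A v else B v)
    by_cases hv : v ∈ Wset A B j
    · rw [if_pos hv]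
      obtain ⟨s, hs1, hs2, rfl⟩ := hW_elim hv hvj
      have := trj_ne_A hN hA hB hab hs1 hs2
      exact hA.2.2.1 _ this.1 this.2
    · rw [if_neg hv]
      have := hout_junkB hv hvbo
      exact hB.2.2.1 _ this.1 this.2
  · intro u hu v hv h
    obtain ⟨huj, hubo⟩ := hu
    obtain ⟨hvj, hvbo⟩ := hv
    simp only [swapX] at h
    by_cases hu' : u ∈ Wset A B j <;> by_cases hv' : v ∈ Wset A B j
    · rw [if_pos hu', if_pos hv'] at h
      obtain ⟨s, hs1, hs2, rfl⟩ := hW_elim hu' huj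
      obtain ⟨r, hr1, hr2, rfl⟩ := hW_elim hv' hvj
      have h1 := trj_ne_A hN hA hB hab hs1 hs2
      have h2 := trj_ne_A hN hA hB hab hr1 hr2
      exact hA.2.2.2 ⟨h1.1, h1.2⟩ ⟨h2.1, h2.2⟩ h
    · rw [if_pos hu', if_neg hv'] at h
      exfalso
      obtain ⟨s, hs1, hs2, rfl⟩ := hW_elim hu' huj
      have hrel := trj_rel hN hA hB hab (v₀ := j) (s := s - 1) (by omega)
      rw [show s - 1 + 1 = s from by omega] at hrel
      have hBeq : B v = B (trj A B j (s - 1)) := by rw [← hrel.1, h]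
      have hv1 := hout_junkB hv' hvbo
      have hv2 := trj_not_junkB (A := A) hB (v₀ := j) (s := s - 1) (by omega)
      have := hB.2.2.2 ⟨hv1.1, hv1.2⟩ ⟨hv2.1, hv2.2⟩ hBeq
      exact hv' (this ▸ ⟨s - 1, by omega, rfl⟩)
    · rw [if_neg hu', if_pos hv'] at h
      exfalso
      obtain ⟨s, hs1, hs2, rfl⟩ := hW_elim hv' hvj
      have hrel := trj_rel hN hA hB hab (v₀ := j) (s := s - 1) (by omega)
      rw [show s - 1 + 1 = s from by omega] at hrel
      have hBeq : B u = B (trj A B j (s - 1)) := by rw [← hrel.1, ← h]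
      have hu1 := hout_junkB hu' hubo
      have hu2 := trj_not_junkB (A := A) hB (v₀ := j) (s := s - 1) (by omega)
      have := hB.2.2.2 ⟨hu1.1, hu1.2⟩ ⟨hu2.1, hu2.2⟩ hBeq
      exact hu' (this ▸ ⟨s - 1, by omega, rfl⟩)
    · rw [if_neg hu', if_neg hv'] at h
      have hu1 := hout_junkB hu' hubo
      have hv1 := hout_junkB hv' hvbo
      exact hB.2.2.2 ⟨hu1.1, hu1.2⟩ ⟨hv1.1, hv1.2⟩ h

lemma swapY_mem (hN : 3 ≤ N) (hA : A ∈ ES T j a₂) (hB : B ∈ ES T b₁ b₂)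
    (hab : j ≠ a₂)
    (hbs : trj A B j (stopT A B j) = b₁ ∨ trj A B j (stopT A B j) = b₂) :
    swapY A B j ∈ ES T (trj A B j (stopT A B j)) a₂ := by
  set M := stopT A B j with hM
  set e := trj A B j M with he
  have ha2W : a₂ ∉ Wset A B j := a₂_notMem_W hN hA hB hab
  have hW_lt : ∀ {v}, v ∈ Wset A B j → v ≠ e → ∃ s < M, trj A B j s = v := by
    rintro v ⟨s, hs, rfl⟩ hne
    rcases Nat.lt_or_ge s M with h' | h'
    · exact ⟨s, h', rfl⟩
    · exact absurd (by rw [le_antisymm hs h']) hne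
  refine ⟨?_, ?_, ?_, ?_⟩
  · show (if _ then B e else A e) = Jk
    rw [if_pos e_mem_W]
    rcases hbs with h | h <;> rw [h]
    · exact hB.1
    · exact hB.2.1
  · show (if _ then B a₂ else A a₂) = Jk
    rw [if_neg ha2W]; exact hA.2.1
  · intro v hve hva
    show IsUTri T (if _ then B v else A v) ∧ UInc v (if _ then B v else A v)
    by_cases hv : v ∈ Wset A B j
    · rw [if_pos hv]
      obtain ⟨s, hs, rfl⟩ := hW_lt hv hve
      have := trj_not_junkB (A := A) hB hs
      exact hB.2.2.1 _ this.1 this.2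
    · rw [if_neg hv]
      have hvj : v ≠ j := fun h => hv (h ▸ j_mem_W)
      exact hA.2.2.1 _ hvj hva
  · intro u hu v hv h
    obtain ⟨hue, hua⟩ := hu
    obtain ⟨hve, hva⟩ := hv
    simp only [swapY] at h
    by_cases hu' : u ∈ Wset A B j <;> by_cases hv' : v ∈ Wset A B j
    · rw [if_pos hu', if_pos hv'] at h
      obtain ⟨s, hs, rfl⟩ := hW_lt hu' hue
      obtain ⟨r, hr, rfl⟩ := hW_lt hv' hve
      have h1 := trj_not_junkB (A := A) hB hs
      have h2 := trj_not_junkB (A := A) hB hr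
      exact hB.2.2.2 ⟨h1.1, h1.2⟩ ⟨h2.1, h2.2⟩ h
    · rw [if_pos hu', if_neg hv'] at h
      exfalso
      obtain ⟨s, hs, rfl⟩ := hW_lt hu' hue
      have hrel := trj_rel hN hA hB hab hs
      have hAeq : A v = A (trj A B j (s + 1)) := by rw [hrel.1, ← h]
      have hvj : v ≠ j := fun hc => hv' (hc ▸ j_mem_W)
      have := hA.2.2.2 ⟨hvj, hva⟩ ⟨hrel.2.1, hrel.2.2⟩ hAeq
      exact hv' (this ▸ ⟨s + 1, by omega, rfl⟩)
    · rw [if_neg hu', if_pos hv'] at h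
      exfalso
      obtain ⟨s, hs, rfl⟩ := hW_lt hv' hve
      have hrel := trj_rel hN hA hB hab hs
      have hAeq : A u = A (trj A B j (s + 1)) := by rw [hrel.1, h]
      have huj : u ≠ j := fun hc => hu' (hc ▸ j_mem_W)
      have := hA.2.2.2 ⟨huj, hua⟩ ⟨hrel.2.1, hrel.2.2⟩ hAeq
      exact hu' (this ▸ ⟨s + 1, by omega, rfl⟩)
    · rw [if_neg hu', if_neg hv'] at h
      have huj : u ≠ j := fun hc => hu' (hc ▸ j_mem_W)
      have hvj : v ≠ j := fun hc => hv' (hc ▸ j_mem_W)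
      exact hA.2.2.2 ⟨huj, hua⟩ ⟨hvj, hva⟩ h

end SwapMem
section SwapInvol

variable {N : ℕ} [NeZero N] {T : Triang N}
variable {j a₂ b₁ b₂ : Vx N} {A B : Vx N → Vx N × ℕ × ℕ}

lemma swap_invol (hN : 3 ≤ N) (hA : A ∈ ES T j a₂) (hB : B ∈ ES T b₁ b₂)
    (hab : j ≠ a₂) (hbb : b₁ ≠ b₂) (hjb1 : j ≠ b₁) (hjb2 : j ≠ b₂) :
    (∀ s ≤ stopT A B j, trj (swapX A B j) (swapY A B j) j s = trj A B j s) ∧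
    stopT (swapX A B j) (swapY A B j) j = stopT A B j ∧
    Wset (swapX A B j) (swapY A B j) j = Wset A B j ∧
    swapX (swapX A B j) (swapY A B j) j = A ∧
    swapY (swapX A B j) (swapY A B j) j = B := by
  set M := stopT A B j with hM
  set e := trj A B j M with he
  set X := swapX A B j with hX'
  set Y := swapY A B j with hY'
  have hend : e = b₁ ∨ e = b₂ := trj_end hN hA hB hab (Or.inl rfl)
  obtain ⟨bo, hbs⟩ : ∃ bo, (e = b₁ ∧ bo = b₂) ∨ (e = b₂ ∧ bo = b₁) := by
    rcases hend with h | h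
    · exact ⟨b₂, Or.inl ⟨h, rfl⟩⟩
    · exact ⟨b₁, Or.inr ⟨h, rfl⟩⟩
  have hjbo : j ≠ bo := by rcases hbs with ⟨-, rfl⟩ | ⟨-, rfl⟩ <;> assumption
  have hje : j ≠ e := by rcases hbs with ⟨h, -⟩ | ⟨h, -⟩ <;> rw [h] <;> assumption
  have hX : X ∈ ES T j bo := swapX_mem hN hA hB hab hbb hbs
  have hY : Y ∈ ES T e a₂ := swapY_mem hN hA hB hab hend
  have htrj : ∀ s ≤ M, trj X Y j s = trj A B j s := by
    intro s
    induction s with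
    | zero => intro _; rfl
    | succ s ih =>
      intro hs
      have hsM : s < M := by omega
      have hmemW : trj A B j s ∈ Wset A B j := ⟨s, by omega, rfl⟩
      have hYw : Y (trj A B j s) = B (trj A B j s) := by
        show (if _ then B _ else A _) = _
        rw [if_pos hmemW]
      have hvY : Y (trj A B j s) ≠ Jk := by
        rw [hYw]; exact stop_min hsM
      have hspec := nxt_spec hN hX hY hjbo hvY
      have hcand : trj A B j (s + 1) ∈ Wset A B j := ⟨s + 1, by omega, rfl⟩
      have hXc : X (trj A B j (s + 1)) = Y (trj A B j s) := by
        show (if _ then A _ else B _) = _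
        rw [if_pos hcand, hYw]
        exact (trj_rel hN hA hB hab hsM).1
      have hne1 : trj A B j (s + 1) ≠ j :=
        (trj_ne_A hN hA hB hab (Nat.le_add_left 1 s) (by omega)).1
      have hne2 : trj A B j (s + 1) ≠ bo := by
        intro h
        exact bo_notMem_W hN hA hB hab
          (by rcases hbs with ⟨-, rfl⟩ | ⟨-, rfl⟩; exacts [Or.inr rfl, Or.inl rfl])
          (by rcases hbs with ⟨h1, rfl⟩ | ⟨h1, rfl⟩
              · exact fun hc => hbb (hc.trans h1).symm
              · exact fun hc => hbb (hc.trans h1)) (h ▸ hcand)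
      rw [trj_succ, ih (by omega)]
      exact (nxt_unique hX hspec.1 hspec.2.1 hspec.2.2 hne1 hne2 hXc).symm
  have hstop : stopT X Y j = M := by
    have hmem : Y (trj X Y j M) = Jk := by
      rw [htrj M le_rfl, ← he]
      exact hY.1
    have hle : stopT X Y j ≤ M := Nat.sInf_le hmem
    apply le_antisymm hle
    by_contra hc
    push_neg at hc
    have h1 : Y (trj X Y j (stopT X Y j)) = Jk :=
      stop_mem hN hX hY hjbo (Or.inl rfl)
    rw [htrj _ (by omega)] at h1
    have h2 : Y (trj A B j (stopT X Y j)) = B (trj A B j (stopT X Y j)) := by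
      show (if _ then B _ else A _) = _
      rw [if_pos ⟨stopT X Y j, by omega, rfl⟩]
    rw [h2] at h1
    exact stop_min (hM ▸ hc) h1
  have hWset : Wset X Y j = Wset A B j := by
    ext v
    constructor <;> rintro ⟨s, hs, rfl⟩
    · rw [hstop] at hs
      rw [htrj s hs]
      exact ⟨s, hs, rfl⟩
    · rw [← htrj s hs]
      exact ⟨s, hstop ▸ hs, rfl⟩
  refine ⟨htrj, hstop, hWset, ?_, ?_⟩
  · funext v
    show (if v ∈ Wset X Y j then X v else Y v) = A v
    rw [hWset]
    by_cases hv : v ∈ Wset A B j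
    · rw [if_pos hv]
      show (if _ then A v else B v) = A v
      rw [if_pos hv]
    · rw [if_neg hv]
      show (if _ then B v else A v) = A v
      rw [if_neg hv]
  · funext v
    show (if v ∈ Wset X Y j then Y v else X v) = B v
    rw [hWset]
    by_cases hv : v ∈ Wset A B j
    · rw [if_pos hv]
      show (if _ then B v else A v) = B v
      rw [if_pos hv]
    · rw [if_neg hv]
      show (if _ then A v else B v) = B v
      rw [if_neg hv]

end SwapInvol
section Theta

variable {N : ℕ} [NeZero N]

/-- The Kuo involution. -/
def theta (jv iv : Vx N)
    (PQ : (Vx N → Vx N × ℕ × ℕ) × (Vx N → Vx N × ℕ × ℕ)) :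
    (Vx N → Vx N × ℕ × ℕ) × (Vx N → Vx N × ℕ × ℕ) :=
  let A := if PQ.1 jv = Jk then PQ.1 else PQ.2
  let B := if PQ.1 jv = Jk then PQ.2 else PQ.1
  if swapX A B jv iv = Jk then (swapX A B jv, swapY A B jv)
  else (swapY A B jv, swapX A B jv)

lemma theta_pos {jv iv : Vx N} {P Q : Vx N → Vx N × ℕ × ℕ} (h : P jv = Jk) :
    theta jv iv (P, Q) = if swapX P Q jv iv = Jk then (swapX P Q jv, swapY P Q jv)
      else (swapY P Q jv, swapX P Q jv) := by
  unfold theta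
  simp only [if_pos h]

lemma theta_neg {jv iv : Vx N} {P Q : Vx N → Vx N × ℕ × ℕ} (h : ¬ P jv = Jk) :
    theta jv iv (P, Q) = if swapX Q P jv iv = Jk then (swapX Q P jv, swapY Q P jv)
      else (swapY Q P jv, swapX Q P jv) := by
  unfold theta
  simp only [if_neg h]

lemma ncard_prod {α β : Type*} (s : Set α) (t : Set β) :
    (s ×ˢ t).ncard = s.ncard * t.ncard := by
  rw [← Nat.card_coe_set_eq, ← Nat.card_coe_set_eq, ← Nat.card_coe_set_eq,
    ← Nat.card_prod]
  exact Nat.card_congr (Equiv.Set.prod s t)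

/-- Everything we need about one application of `theta`. -/
lemma theta_main (hN : 3 ≤ N) {T : Triang N} {jv iv a₂ b₁ b₂ : Vx N}
    {A B : Vx N → Vx N × ℕ × ℕ}
    (hA : A ∈ ES T jv a₂) (hB : B ∈ ES T b₁ b₂)
    (hab : jv ≠ a₂) (hbb : b₁ ≠ b₂) (hjb1 : jv ≠ b₁) (hjb2 : jv ≠ b₂)
    (ha2b1 : a₂ ≠ b₁) (ha2b2 : a₂ ≠ b₂) (hivj : iv ≠ jv) :
    ∃ e bo, e = trj A B jv (stopT A B jv) ∧
      ((e = b₁ ∧ bo = b₂) ∨ (e = b₂ ∧ bo = b₁)) ∧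
      swapX A B jv ∈ ES T jv bo ∧ swapY A B jv ∈ ES T e a₂ ∧
      (∀ PQ, (PQ = (A, B) ∨ PQ = (B, A)) →
        theta jv iv PQ = (if iv = bo then (swapX A B jv, swapY A B jv)
          else (swapY A B jv, swapX A B jv)) ∧
        theta jv iv (theta jv iv PQ) = (if A iv = Jk then (A, B) else (B, A))) := by
  set M := stopT A B jv with hM
  set e := trj A B jv M with he
  have hend : e = b₁ ∨ e = b₂ := trj_end hN hA hB hab (Or.inl rfl)
  obtain ⟨bo, hbs⟩ : ∃ bo, (e = b₁ ∧ bo = b₂) ∨ (e = b₂ ∧ bo = b₁) := by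
    rcases hend with h | h
    · exact ⟨b₂, Or.inl ⟨h, rfl⟩⟩
    · exact ⟨b₁, Or.inr ⟨h, rfl⟩⟩
  have hjbo : jv ≠ bo := by rcases hbs with ⟨-, rfl⟩ | ⟨-, rfl⟩ <;> assumption
  have hje : jv ≠ e := by rcases hbs with ⟨h, -⟩ | ⟨h, -⟩ <;> rw [h] <;> assumption
  have ha2e : a₂ ≠ e := by rcases hbs with ⟨h, -⟩ | ⟨h, -⟩ <;> rw [h] <;> assumption
  set X := swapX A B jv with hX'
  set Y := swapY A B jv with hY'
  have hX : X ∈ ES T jv bo := swapX_mem hN hA hB hab hbb hbs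
  have hY : Y ∈ ES T e a₂ := swapY_mem hN hA hB hab hend
  obtain ⟨-, -, -, hXX, hYY⟩ := swap_invol hN hA hB hab hbb hjb1 hjb2
  have hXtest : (X iv = Jk) ↔ iv = bo := by
    rw [ES_eq_Jk_iff hX]
    exact ⟨fun h => h.resolve_left hivj, fun h => Or.inr h⟩
  have happly : ∀ PQ, (PQ = (A, B) ∨ PQ = (B, A)) →
      theta jv iv PQ = (if iv = bo then (X, Y) else (Y, X)) := by
    rintro PQ (rfl | rfl)
    · rw [theta_pos hA.1]
      by_cases h : iv = bo
      · rw [if_pos (hXtest.2 h), if_pos h]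
      · rw [if_neg (fun hc => h (hXtest.1 hc)), if_neg h]
    · rw [theta_neg (ES_ne_Jk hB hjb1 hjb2)]
      by_cases h : iv = bo
      · rw [if_pos (hXtest.2 h), if_pos h]
      · rw [if_neg (fun hc => h (hXtest.1 hc)), if_neg h]
  have hsecond : theta jv iv (if iv = bo then (X, Y) else (Y, X)) =
      (if A iv = Jk then (A, B) else (B, A)) := by
    have hYj : Y jv ≠ Jk := ES_ne_Jk hY hje hab
    have hstep : theta jv iv (X, Y) = (if A iv = Jk then (A, B) else (B, A)) := by
      rw [theta_pos hX.1, hXX, hYY]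
    have hstep' : theta jv iv (Y, X) = (if A iv = Jk then (A, B) else (B, A)) := by
      rw [theta_neg hYj, hXX, hYY]
    by_cases h : iv = bo
    · rw [if_pos h, hstep]
    · rw [if_neg h, hstep']
  exact ⟨e, bo, rfl, hbs, hX, hY, fun PQ hPQ =>
    ⟨happly PQ hPQ, by rw [happly PQ hPQ, hsecond]⟩⟩

end Theta
/-- Kuo-condensation/Ptolemy relation for the matching numbers
`n_{ij}` of a triangulation of an unpunctured disc: for boundary vertices
`i, j, k, l` in clockwise order,
`n_{ik} n_{jl} = n_{ij} n_{kl} + n_{li} n_{jk}`. -/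
theorem ptolemy_matching_numbers (N : ℕ) (hN : 3 ≤ N) [NeZero N] (T : Triang N)
    (i j k l : Vx N) (h1 : 0 < (j - i).val) (h2 : (j - i).val < (k - i).val)
    (h3 : (k - i).val < (l - i).val) :
    nMatch T i k * nMatch T j l =
      nMatch T i j * nMatch T k l + nMatch T l i * nMatch T j k := by
  classical
  have h1' : 0 < arc i j := h1
  have h2' : arc i j < arc i k := h2
  have h3' : arc i k < arc i l := h3
  have hlti : arc i l < N := arc_lt i l
  -- pairwise distinctness
  have hji : j ≠ i := fun h => by have := arc_eq_zero_iff.mpr h; omega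
  have hij : i ≠ j := hji.symm
  have hki : k ≠ i := fun h => by have := arc_eq_zero_iff.mpr h; omega
  have hik : i ≠ k := hki.symm
  have hli : l ≠ i := fun h => by have := arc_eq_zero_iff.mpr h; omega
  have hil : i ≠ l := hli.symm
  have hjk : j ≠ k := fun h => by rw [h] at h2'; exact lt_irrefl _ h2'
  have hkj : k ≠ j := hjk.symm
  have hkl : k ≠ l := fun h => by rw [h] at h3'; exact lt_irrefl _ h3'
  have hlk : l ≠ k := hkl.symm
  have hjl : j ≠ l := fun h => by rw [h] at h2'; omega
  have hlj : l ≠ j := hjl.symm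
  -- geometry facts
  have hjkl : Btw j k l := by
    unfold Btw
    simp only [val_sub_eq_arc]
    have t1 := arc_tri (N := N) i j k
    have t2 := arc_tri (N := N) i j l
    have l1 := arc_lt (N := N) j k
    have l2 := arc_lt (N := N) j l
    omega
  have hjli : Btw j l i := by
    unfold Btw
    simp only [val_sub_eq_arc]
    have t1 := arc_tri (N := N) i j l
    have p1 := arc_pair (N := N) i j
    have l1 := arc_lt (N := N) j l
    have l2 := arc_lt (N := N) j i
    omega
  -- the three sets of pairs of matchings
  have hSprop : ∀ PQ ∈ (ES T i k) ×ˢ (ES T j l), theta j i PQ ∈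
      ((ES T i j) ×ˢ (ES T k l)) ∪ ((ES T l i) ×ˢ (ES T j k)) ∧
      theta j i (theta j i PQ) = PQ := by
    rintro ⟨P, Q⟩ hPQ
    rw [Set.mem_prod] at hPQ
    obtain ⟨hP, hQ⟩ := hPQ
    obtain ⟨e, bo, hetrj, hbs, hX, hY, happly⟩ :=
      theta_main (iv := i) hN hQ hP hjl hik hji hjk hli hlk hij
    obtain ⟨hth, hthth⟩ := happly (P, Q) (Or.inr rfl)
    have hQi : Q i ≠ Jk := ES_ne_Jk hQ hij hil
    refine ⟨?_, by rw [hthth, if_neg hQi]⟩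
    rw [hth]
    rcases hbs with ⟨he1, hbo⟩ | ⟨he1, hbo⟩
    · -- e = i, bo = k : lands in U2
      rw [hbo, if_neg hik]
      right
      rw [Set.mem_prod]
      rw [he1] at hY
      rw [hbo] at hX
      constructor
      · show swapY Q P j ∈ ES T l i
        rw [ES_symm l i]
        exact hY
      · exact hX
    · -- e = k, bo = i : lands in U1
      rw [hbo, if_pos rfl]
      left
      rw [Set.mem_prod]
      rw [he1] at hY
      rw [hbo] at hX
      constructor
      · show swapX Q P j ∈ ES T i j
        rw [ES_symm i j]
        exact hX
      · exact hY
  have hU1prop : ∀ PQ ∈ (ES T i j) ×ˢ (ES T k l),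
      theta j i PQ ∈ (ES T i k) ×ˢ (ES T j l) ∧ theta j i (theta j i PQ) = PQ := by
    rintro ⟨P, Q⟩ hPQ
    rw [Set.mem_prod] at hPQ
    obtain ⟨hP, hQ⟩ := hPQ
    have hP' : P ∈ ES T j i := by rw [ES_symm j i]; exact hP
    obtain ⟨e, bo, hetrj, hbs, hX, hY, happly⟩ :=
      theta_main (iv := i) hN hP' hQ hji hkl hjk hjl hik hil hij
    obtain ⟨hth, hthth⟩ := happly (P, Q) (Or.inl rfl)
    have hPi : P i = Jk := hP.1
    refine ⟨?_, by rw [hthth, if_pos hPi]⟩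
    rw [hth]
    rcases hbs with ⟨he1, hbo⟩ | ⟨he1, hbo⟩
    · -- e = k, bo = l
      rw [hbo, if_neg hil]
      rw [Set.mem_prod]
      rw [he1] at hY
      rw [hbo] at hX
      constructor
      · show swapY P Q j ∈ ES T i k
        rw [ES_symm i k]
        exact hY
      · exact hX
    · -- e = l : impossible
      exact absurd (hetrj.symm.trans he1)
        (endpoint_forced' hN hP' hQ hji (Or.inr ⟨rfl, rfl⟩) hjkl hjli)
  have hU2prop : ∀ PQ ∈ (ES T l i) ×ˢ (ES T j k),
      theta j i PQ ∈ (ES T i k) ×ˢ (ES T j l) ∧ theta j i (theta j i PQ) = PQ := by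
    rintro ⟨P, Q⟩ hPQ
    rw [Set.mem_prod] at hPQ
    obtain ⟨hP, hQ⟩ := hPQ
    obtain ⟨e, bo, hetrj, hbs, hX, hY, happly⟩ :=
      theta_main (iv := i) hN hQ hP hjk hli hjl hji hkl hki hij
    obtain ⟨hth, hthth⟩ := happly (P, Q) (Or.inr rfl)
    have hQi : Q i ≠ Jk := ES_ne_Jk hQ hij hik
    refine ⟨?_, by rw [hthth, if_neg hQi]⟩
    rw [hth]
    rcases hbs with ⟨he1, hbo⟩ | ⟨he1, hbo⟩
    · -- e = l : impossible
      exact absurd (hetrj.symm.trans he1)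
        (endpoint_forced hN hQ hP hjk hli (Or.inl ⟨rfl, rfl⟩) hjkl hjli)
    · -- e = i, bo = l
      rw [hbo, if_neg hil]
      rw [Set.mem_prod]
      rw [he1] at hY
      rw [hbo] at hX
      exact ⟨hY, hX⟩
  -- the bijection
  have hmapsS : Set.MapsTo (theta j i) ((ES T i k) ×ˢ (ES T j l))
      (((ES T i j) ×ˢ (ES T k l)) ∪ ((ES T l i) ×ˢ (ES T j k))) :=
    fun x hx => (hSprop x hx).1
  have hmapsU : Set.MapsTo (theta j i)
      (((ES T i j) ×ˢ (ES T k l)) ∪ ((ES T l i) ×ˢ (ES T j k)))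
      ((ES T i k) ×ˢ (ES T j l)) := by
    rintro x (hx | hx)
    · exact (hU1prop x hx).1
    · exact (hU2prop x hx).1
  have hinv : Set.InvOn (theta j i) (theta j i) ((ES T i k) ×ˢ (ES T j l))
      (((ES T i j) ×ˢ (ES T k l)) ∪ ((ES T l i) ×ˢ (ES T j k))) := by
    constructor
    · exact fun x hx => (hSprop x hx).2
    · rintro x (hx | hx)
      · exact (hU1prop x hx).2
      · exact (hU2prop x hx).2
  have hbij := Set.InvOn.bijOn hinv hmapsS hmapsU
  -- counting
  have hdisj : Disjoint ((ES T i j) ×ˢ (ES T k l)) ((ES T l i) ×ˢ (ES T j k)) := by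
    rw [Set.disjoint_left]
    rintro ⟨P, Q⟩ hm1 hm2
    rw [Set.mem_prod] at hm1 hm2
    exact ES_ne_Jk hm2.1 hjl hji hm1.1.2.1
  have hfin1 : ((ES T i j) ×ˢ (ES T k l)).Finite :=
    Set.Finite.prod (ES_finite i j) (ES_finite k l)
  have hfin2 : ((ES T l i) ×ˢ (ES T j k)).Finite :=
    Set.Finite.prod (ES_finite l i) (ES_finite j k)
  have hcount : ((ES T i k) ×ˢ (ES T j l)).ncard =
      ((ES T i j) ×ˢ (ES T k l)).ncard + ((ES T l i) ×ˢ (ES T j k)).ncard := by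
    rw [← Set.ncard_union_eq hdisj hfin1 hfin2, ← hbij.image_eq,
      Set.ncard_image_of_injOn hbij.injOn]
  rw [nMatch_eq T hik, nMatch_eq T hjl, nMatch_eq T hij, nMatch_eq T hkl,
    nMatch_eq T hli, nMatch_eq T hjk, ← ncard_prod, ← ncard_prod, ← ncard_prod]
  exact hcount

end Frieze
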